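/- Let 0 < γ < 1 < β < α < 2^{1/γ−1}, and let x, y ∈ ℓ_γ with ‖x‖_{ℓ_γ} = 1. If the three points −2^{1/γ−1}x, 0, 2^{1/γ−1}x all lie in y + εB_{ℓ_γ} for some ε > 0, then ε ≥ B(α,β,γ) > 1, where B(α,β,γ) = min(β, (A(α,β,γ)/2)^{1/γ}) and A(α,β,γ) = 2(β/α)^γ + [(2^{1/γ−1}−α)^γ + (2^{1/γ−1}+α)^γ](1 − (β/α)^γ). -/

import Mathlib

/-!
Let `c = 2^(1/γ - 1)`, so that `(2c)^γ = 2`, and `S = (c - α)^γ + (c + α)^γ`, which exceeds `2`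
by strict subadditivity of `t ↦ t^γ`. Coordinatewise,
`|cu + v|^γ + |cu - v|^γ ≥ S|u|^γ - (S - 2)(|v|/α)^γ`: when `|v| ≥ α|u|` this follows from
`|2cu|^γ ≤ |cu + v|^γ + |cu - v|^γ`, and when `|v| < α|u|` concavity of `t ↦ t^γ` shows that
pushing the points `c|u| ± |v|` apart to `(c ± α)|u|` only lowers the sum. Summing over the
coordinates with `‖x‖ = 1` and `‖y‖ ≤ ε` gives `S - (S - 2)(ε/α)^γ ≤ 2ε^γ`, and if `ε < β` this
forces `ε^γ ≥ A(α,β,γ)/2`.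
-/

noncomputable section

/-- Membership in the sequence space `ℓ_γ`. -/
def Memlg (γ : ℝ) (x : ℕ → ℝ) : Prop := Summable fun i => |x i| ^ γ

/-- The `ℓ_γ` γ-norm. -/
def lgNorm (γ : ℝ) (x : ℕ → ℝ) : ℝ := (∑' i, |x i| ^ γ) ^ (1/γ)

/-- The constant `A(α,β,γ)`. -/
def Aconst (α β γ : ℝ) : ℝ :=
  2 * (β/α) ^ γ +
    (((2:ℝ) ^ (1/γ - 1) - α) ^ γ + ((2:ℝ) ^ (1/γ - 1) + α) ^ γ) * (1 - (β/α) ^ γ)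

/-- The constant `B(α,β,γ)`. -/
def Bconst (α β γ : ℝ) : ℝ := min β ((Aconst α β γ / 2) ^ (1/γ))

open Real

namespace Real

lemma rpow_add_lt_add_rpow {p a b : ℝ} (ha : 0 < a) (hb : 0 < b) (hp : p < 1) :
    (a + b) ^ p < a ^ p + b ^ p := by
  have hsplit : ∀ u : ℝ, 0 < u → u ^ p = u * u ^ (p - 1) := fun u hu => by
    conv_lhs => rw [← add_sub_cancel 1 p, rpow_add hu, rpow_one]
  have hab : 0 < a + b := add_pos ha hb
  rw [hsplit _ hab, hsplit _ ha, hsplit _ hb, add_mul]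
  gcongr ?_ + ?_
  · exact mul_lt_mul_of_pos_left (rpow_lt_rpow_of_neg ha (by linarith) (by linarith)) ha
  · exact mul_lt_mul_of_pos_left (rpow_lt_rpow_of_neg hb (by linarith) (by linarith)) hb

end Real

lemma ConcaveOn.map_sub_add_map_add_le {s : Set ℝ} {f : ℝ → ℝ} (hf : ConcaveOn ℝ s f)
    {a b d : ℝ} (hds : a - d ∈ s) (hda : a + d ∈ s) (hbd : |b| ≤ d) :
    f (a - d) + f (a + d) ≤ f (a - b) + f (a + b) := by
  rcases (abs_nonneg b).trans hbd |>.eq_or_lt with hd | hd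
  · obtain rfl : b = 0 := abs_nonpos_iff.mp (hd ▸ hbd)
    rw [← hd]
  obtain ⟨hb₁, hb₂⟩ := abs_le.mp hbd
  set θ := (d + b) / (2 * d)
  have hθ0 : 0 ≤ θ := div_nonneg (by linarith) (by linarith)
  have hθ1 : 0 ≤ 1 - θ := by
    rw [sub_nonneg, div_le_one (by linarith)]; linarith
  have hθ : θ * (2 * d) = d + b := div_mul_cancel₀ _ (by positivity)
  have hsub : θ * (a - d) + (1 - θ) * (a + d) = a - b := by linear_combination -hθ
  have hadd : (1 - θ) * (a - d) + θ * (a + d) = a + b := by linear_combination hθ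
  have h₁ := hf.2 hds hda hθ0 hθ1 (add_sub_cancel θ 1)
  have h₂ := hf.2 hds hda hθ1 hθ0 (sub_add_cancel 1 θ)
  simp only [smul_eq_mul, hsub, hadd] at h₁ h₂
  linarith

lemma map_abs_add_add_map_abs_sub (f : ℝ → ℝ) (u v : ℝ) :
    f |u + v| + f |u - v| = f (|u| + |v|) + f |(|u| - |v|)| := by
  rcases le_total 0 u with hu | hu <;> rcases le_total 0 v with hv | hv
  · rw [abs_of_nonneg hu, abs_of_nonneg hv, abs_of_nonneg (add_nonneg hu hv)]
  · rw [abs_of_nonneg hu, abs_of_nonpos hv, abs_of_nonneg (by linarith : 0 ≤ u - v), add_comm]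
    ring_nf
  · rw [abs_of_nonpos hu, abs_of_nonneg hv, abs_of_nonpos (by linarith : u - v ≤ 0),
      ← abs_neg (u + v), add_comm]
    ring_nf
  · rw [abs_of_nonpos hu, abs_of_nonpos hv, abs_of_nonpos (by linarith : u + v ≤ 0),
      ← abs_neg (u - v)]
    ring_nf

lemma le_rpow_abs_add_add_rpow_abs_sub {γ α c : ℝ} (hγ0 : 0 ≤ γ) (hγ1 : γ ≤ 1) (hα : 0 < α)
    (hαc : α ≤ c) (u v : ℝ) :
    ((c - α) ^ γ + (c + α) ^ γ) * |u| ^ γ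
        - ((c - α) ^ γ + (c + α) ^ γ - (2 * c) ^ γ) * (|v| ^ γ / α ^ γ)
      ≤ |c * u + v| ^ γ + |c * u - v| ^ γ := by
  set S := (c - α) ^ γ + (c + α) ^ γ
  have hc : 0 ≤ c := hα.le.trans hαc
  have hS : (2 * c) ^ γ ≤ S := by
    have := rpow_add_le_add_rpow (sub_nonneg.2 hαc) (by linarith : 0 ≤ c + α) hγ0 hγ1
    rwa [sub_add_add_cancel, ← two_mul] at this
  rcases le_or_gt (α * |u|) |v| with hv | hv
  · have hu : |u| ^ γ ≤ |v| ^ γ / α ^ γ := by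
      rw [le_div_iff₀ (rpow_pos_of_pos hα γ), ← mul_rpow (abs_nonneg u) hα.le, mul_comm]
      exact rpow_le_rpow (by positivity) hv hγ0
    calc S * |u| ^ γ - (S - (2 * c) ^ γ) * (|v| ^ γ / α ^ γ)
        ≤ S * |u| ^ γ - (S - (2 * c) ^ γ) * |u| ^ γ := by gcongr
      _ = |(c * u + v) + (c * u - v)| ^ γ := by
          rw [add_add_sub_cancel, ← two_mul, ← mul_assoc, abs_mul,
            abs_of_nonneg (by positivity : (0:ℝ) ≤ 2 * c), mul_rpow (by positivity) (abs_nonneg u)]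
          ring
      _ ≤ (|c * u + v| + |c * u - v|) ^ γ := rpow_le_rpow (abs_nonneg _) (abs_add_le _ _) hγ0
      _ ≤ |c * u + v| ^ γ + |c * u - v| ^ γ :=
          rpow_add_le_add_rpow (abs_nonneg _) (abs_nonneg _) hγ0 hγ1
  · have hspread := (concaveOn_rpow hγ0 hγ1).map_sub_add_map_add_le (a := c * |u|)
      (d := α * |u|) (b := |v|)
      (by rw [Set.mem_Ici, ← sub_mul]; exact mul_nonneg (sub_nonneg.2 hαc) (abs_nonneg u))
      (by rw [Set.mem_Ici]; positivity) (by rw [abs_abs]; exact hv.le)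
    have hcv : 0 ≤ c * |u| - |v| := by nlinarith [abs_nonneg u]
    calc S * |u| ^ γ - (S - (2 * c) ^ γ) * (|v| ^ γ / α ^ γ)
        ≤ S * |u| ^ γ := sub_le_self _ (mul_nonneg (sub_nonneg.2 hS) (by positivity))
      _ = (c * |u| - α * |u|) ^ γ + (c * |u| + α * |u|) ^ γ := by
          rw [← sub_mul, ← add_mul, mul_rpow (sub_nonneg.2 hαc) (abs_nonneg u),
            mul_rpow (by linarith) (abs_nonneg u)]
          ring
      _ ≤ (c * |u| - |v|) ^ γ + (c * |u| + |v|) ^ γ := hspread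
      _ = |c * u + v| ^ γ + |c * u - v| ^ γ := by
          rw [map_abs_add_add_map_abs_sub (· ^ γ), abs_mul, abs_of_nonneg hc, abs_of_nonneg hcv,
            add_comm]

lemma lgNorm_nonneg (γ : ℝ) (x : ℕ → ℝ) : 0 ≤ lgNorm γ x :=
  rpow_nonneg (tsum_nonneg fun _ => rpow_nonneg (abs_nonneg _) _) _

lemma lgNorm_rpow {γ : ℝ} (hγ : γ ≠ 0) (x : ℕ → ℝ) : lgNorm γ x ^ γ = ∑' i, |x i| ^ γ := by
  rw [lgNorm, one_div, rpow_inv_rpow (tsum_nonneg fun _ => rpow_nonneg (abs_nonneg _) _) hγ]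

lemma lgNorm_neg (γ : ℝ) (x : ℕ → ℝ) : lgNorm γ (-x) = lgNorm γ x := by
  simp only [lgNorm, Pi.neg_apply, abs_neg]

lemma Memlg.const_smul {γ : ℝ} {x : ℕ → ℝ} (hx : Memlg γ x) (a : ℝ) : Memlg γ (a • x) := by
  simpa only [Memlg, Pi.smul_apply, smul_eq_mul, abs_mul,
    mul_rpow (abs_nonneg _) (abs_nonneg _)] using Summable.mul_left (|a| ^ γ) hx

lemma Memlg.sub {γ : ℝ} (hγ0 : 0 ≤ γ) (hγ1 : γ ≤ 1) {x y : ℕ → ℝ} (hx : Memlg γ x)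
    (hy : Memlg γ y) : Memlg γ (x - y) :=
  Summable.of_nonneg_of_le (fun _ => rpow_nonneg (abs_nonneg _) _)
    (fun _ => (rpow_le_rpow (abs_nonneg _) (abs_sub _ _) hγ0).trans
      (rpow_add_le_add_rpow (abs_nonneg _) (abs_nonneg _) hγ0 hγ1))
    (Summable.add hx hy)

lemma le_lgNorm_rpow_add_lgNorm_rpow {γ α c : ℝ} (hγ0 : 0 < γ) (hγ1 : γ ≤ 1) (hα : 0 < α)
    (hαc : α ≤ c) {x y : ℕ → ℝ} (hx : Memlg γ x) (hy : Memlg γ y) :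
    ((c - α) ^ γ + (c + α) ^ γ) * lgNorm γ x ^ γ
        - ((c - α) ^ γ + (c + α) ^ γ - (2 * c) ^ γ) * (lgNorm γ y ^ γ / α ^ γ)
      ≤ lgNorm γ ((-c) • x - y) ^ γ + lgNorm γ (c • x - y) ^ γ := by
  have hplus : Memlg γ ((-c) • x - y) := (hx.const_smul _).sub hγ0.le hγ1 hy
  have hminus : Memlg γ (c • x - y) := (hx.const_smul _).sub hγ0.le hγ1 hy
  have hx' : Summable fun i => |x i| ^ γ := hx
  have hy' : Summable fun i => |y i| ^ γ / α ^ γ := Summable.div_const hy _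
  have hpoint : ∀ i, ((c - α) ^ γ + (c + α) ^ γ) * |x i| ^ γ
        - ((c - α) ^ γ + (c + α) ^ γ - (2 * c) ^ γ) * (|y i| ^ γ / α ^ γ)
      ≤ |((-c) • x - y) i| ^ γ + |(c • x - y) i| ^ γ := fun i => by
    simpa only [Pi.sub_apply, Pi.smul_apply, smul_eq_mul, neg_mul, ← neg_add', abs_neg]
      using le_rpow_abs_add_add_rpow_abs_sub hγ0.le hγ1 hα hαc (x i) (y i)
  have hsum := Summable.tsum_le_tsum hpoint ((hx'.mul_left _).sub (hy'.mul_left _))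
    (hplus.add hminus)
  rwa [Summable.tsum_sub (hx'.mul_left _) (hy'.mul_left _), Summable.tsum_add hplus hminus,
    tsum_mul_left, tsum_mul_left, tsum_div_const, ← lgNorm_rpow hγ0.ne', ← lgNorm_rpow hγ0.ne',
    ← lgNorm_rpow hγ0.ne', ← lgNorm_rpow hγ0.ne'] at hsum

lemma two_mul_two_rpow_one_div_sub_one_rpow {γ : ℝ} (hγ : γ ≠ 0) :
    (2 * (2:ℝ) ^ (1/γ - 1)) ^ γ = 2 := by
  rw [← rpow_one_add' zero_le_two (by rw [add_sub_cancel]; exact one_div_ne_zero hγ),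
    add_sub_cancel, one_div, rpow_inv_rpow zero_le_two hγ]

lemma two_lt_rpow_sub_add_rpow_add {γ α : ℝ} (hγ0 : 0 < γ) (hγ1 : γ < 1) (hα0 : 0 < α)
    (hα : α < (2:ℝ) ^ (1/γ - 1)) :
    2 < ((2:ℝ) ^ (1/γ - 1) - α) ^ γ + ((2:ℝ) ^ (1/γ - 1) + α) ^ γ := by
  have := rpow_add_lt_add_rpow (sub_pos.2 hα) (by positivity : 0 < (2:ℝ) ^ (1/γ - 1) + α) hγ1
  rwa [sub_add_add_cancel, ← two_mul, two_mul_two_rpow_one_div_sub_one_rpow hγ0.ne'] at this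

lemma one_lt_Bconst {γ α β : ℝ} (hγ0 : 0 < γ) (hγ1 : γ < 1) (hβ : 1 < β) (hβα : β < α)
    (hα : α < (2:ℝ) ^ (1/γ - 1)) : 1 < Bconst α β γ := by
  have hα0 : 0 < α := by linarith
  have hS := two_lt_rpow_sub_add_rpow_add hγ0 hγ1 hα0 hα
  have hk : (β / α) ^ γ < 1 := rpow_lt_one (by positivity) ((div_lt_one hα0).2 hβα) hγ0
  have hA : 1 < Aconst α β γ / 2 := by
    unfold Aconst
    nlinarith
  exact lt_min hβ (one_lt_rpow hA (by positivity))

lemma Bconst_le {γ α β ε : ℝ} (hγ : 0 < γ) (hβ : 0 ≤ β) (hβα : β ≤ α) (hε : 0 ≤ ε)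
    (hS : 2 ≤ ((2:ℝ) ^ (1/γ - 1) - α) ^ γ + ((2:ℝ) ^ (1/γ - 1) + α) ^ γ)
    (h : ((2:ℝ) ^ (1/γ - 1) - α) ^ γ + ((2:ℝ) ^ (1/γ - 1) + α) ^ γ
        - (((2:ℝ) ^ (1/γ - 1) - α) ^ γ + ((2:ℝ) ^ (1/γ - 1) + α) ^ γ - 2) * (ε ^ γ / α ^ γ)
      ≤ 2 * ε ^ γ) :
    Bconst α β γ ≤ ε := by
  rcases le_or_gt β ε with hβε | hεβ
  · exact (min_le_left _ _).trans hβε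
  have hα : 0 < α := by linarith
  have hk : ε ^ γ / α ^ γ ≤ (β / α) ^ γ := by
    rw [div_rpow hβ hα.le]
    gcongr
  have hk1 : (β / α) ^ γ ≤ 1 := rpow_le_one (by positivity) ((div_le_one hα).2 hβα) hγ.le
  have hA : Aconst α β γ / 2 ≤ ε ^ γ := by
    unfold Aconst
    nlinarith
  calc Bconst α β γ ≤ (Aconst α β γ / 2) ^ (1/γ) := min_le_right _ _
    _ ≤ (ε ^ γ) ^ (1/γ) := by
      gcongr
      unfold Aconst
      nlinarith [rpow_nonneg hβ γ]
    _ = ε := by rw [one_div, rpow_rpow_inv hε hγ.ne']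

theorem three_point_covering_general (γ β α : ℝ) (hγ0 : 0 < γ) (hγ1 : γ < 1)
    (hβ : 1 < β) (hβα : β < α) (hα : α < (2:ℝ) ^ (1/γ - 1))
    (x y : ℕ → ℝ) (hx : Memlg γ x) (hy : Memlg γ y) (hx1 : lgNorm γ x = 1)
    (ε : ℝ)
    (h1 : lgNorm γ ((-((2:ℝ) ^ (1/γ - 1))) • x - y) ≤ ε)
    (h2 : lgNorm γ ((0 : ℕ → ℝ) - y) ≤ ε)
    (h3 : lgNorm γ (((2:ℝ) ^ (1/γ - 1)) • x - y) ≤ ε) :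
    Bconst α β γ ≤ ε ∧ 1 < Bconst α β γ := by
  set c := (2:ℝ) ^ (1/γ - 1)
  have hα0 : 0 < α := by linarith
  have hε : 0 ≤ ε := (lgNorm_nonneg γ _).trans h2
  have hy1 : lgNorm γ y ≤ ε := by rwa [zero_sub, lgNorm_neg] at h2
  have hS := two_lt_rpow_sub_add_rpow_add hγ0 hγ1 hα0 hα
  refine ⟨Bconst_le hγ0 (by linarith) hβα.le hε hS.le ?_, one_lt_Bconst hγ0 hγ1 hβ hβα hα⟩
  have key := le_lgNorm_rpow_add_lgNorm_rpow hγ0 hγ1.le hα0 hα.le hx hy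
  rw [hx1, one_rpow, mul_one, two_mul_two_rpow_one_div_sub_one_rpow hγ0.ne'] at key
  calc _ ≤ (c - α) ^ γ + (c + α) ^ γ
          - ((c - α) ^ γ + (c + α) ^ γ - 2) * (lgNorm γ y ^ γ / α ^ γ) := by
        gcongr
        exact lgNorm_nonneg γ y
    _ ≤ lgNorm γ ((-c) • x - y) ^ γ + lgNorm γ (c • x - y) ^ γ := key
    _ ≤ ε ^ γ + ε ^ γ := by
        gcongr
        · exact lgNorm_nonneg γ _
        · exact lgNorm_nonneg γ _
    _ = 2 * ε ^ γ := by ring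

theorem three_point_covering (γ β α : ℝ) (hγ0 : 0 < γ) (hγ1 : γ < 1)
    (hβ : 1 < β) (hβα : β < α) (hα : α < (2:ℝ) ^ (1/γ - 1))
    (x y : ℕ → ℝ) (hx : Memlg γ x) (hy : Memlg γ y) (hx1 : lgNorm γ x = 1)
    (ε : ℝ) (hε : 0 < ε)
    (h1 : lgNorm γ ((-((2:ℝ) ^ (1/γ - 1))) • x - y) ≤ ε)
    (h2 : lgNorm γ ((0 : ℕ → ℝ) - y) ≤ ε)
    (h3 : lgNorm γ (((2:ℝ) ^ (1/γ - 1)) • x - y) ≤ ε) :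
    Bconst α β γ ≤ ε ∧ 1 < Bconst α β γ :=
  three_point_covering_general γ β α hγ0 hγ1 hβ hβα hα x y hx hy hx1 ε h1 h2 h3
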